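/- Let G be a right-linear context-free grammar and let F be the FSA derived from G by the basic approximation algorithm, i.e., the flattening F_≡ of the recognizer R(G) unfolded by the collapsing stack congruence. Then L(G) = L(F). -/

import Mathlib

/-!
Infrastructure for finite-state approximation of context-free grammars
(Pereira & Wright). We use Mathlib's `ContextFreeGrammar`.

A dotted rule `A → α · β` is represented as `(some A, α, β)`;
the auxiliary dotted rules `S' → · S` and `S' → S ·` are represented with
first component `none`.  States of the LR(0) characteristic machine `M(G)`
are sets of dotted rules (the determinization by the subset construction);
the transition function `next` is total, with the empty set `∅` playing the
role of "undefined", so genuine transitions are those with nonempty target.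
-/

namespace LRApprox

universe uN uT

variable {T : Type uT}

/-- Context-free grammar as in the older Mathlib (nonterminals in an arbitrary universe `uN`). -/
structure ContextFreeGrammar (T : Type uT) where
  /-- Type of nonterminals. -/
  NT : Type uN
  /-- Initial nonterminal. -/
  initial : NT
  /-- Rewrite rules. -/
  rules : Finset (ContextFreeRule T NT)

/-- One rewriting step by a rule of `g`. -/
def ContextFreeGrammar.Produces (g : ContextFreeGrammar.{uN} T) (u v : List (Symbol T g.NT)) :
    Prop :=
  ∃ r ∈ g.rules, r.Rewrites u v

/-- Finitely many rewriting steps. -/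
abbrev ContextFreeGrammar.Derives (g : ContextFreeGrammar.{uN} T) :
    List (Symbol T g.NT) → List (Symbol T g.NT) → Prop :=
  Relation.ReflTransGen g.Produces

/-- `g` derives `s` from its initial nonterminal. -/
def ContextFreeGrammar.Generates (g : ContextFreeGrammar.{uN} T) (s : List (Symbol T g.NT)) :
    Prop :=
  g.Derives [Symbol.nonterminal g.initial] s

/-- The language generated by `g`. -/
def ContextFreeGrammar.language (g : ContextFreeGrammar.{uN} T) : Language T :=
  { w : List T | g.Generates (w.map Symbol.terminal) }

/-- A dotted rule `A → α · β`; `none` as first component stands for the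
auxiliary start symbol `S'`. -/
abbrev DottedRule (g : ContextFreeGrammar.{uN} T) : Type _ :=
  Option g.NT × List (Symbol T g.NT) × List (Symbol T g.NT)

/-- A state of the characteristic machine `M(G)`: a set of dotted rules. -/
abbrev LRState (g : ContextFreeGrammar.{uN} T) : Type _ := Set (DottedRule g)

/-- Closure of a set of dotted rules: whenever `A → α · B β` is present and
`B → γ` is a rule, add `B → · γ`. -/
inductive Closure (g : ContextFreeGrammar.{uN} T) (R : Set (DottedRule g)) :
    DottedRule g → Prop
  | base {d : DottedRule g} : d ∈ R → Closure g R d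
  | step {A : Option g.NT} {α β : List (Symbol T g.NT)} {B : g.NT}
      (r : ContextFreeRule T g.NT) :
      Closure g R (A, α, Symbol.nonterminal B :: β) →
      r ∈ g.rules → r.input = B → Closure g R (some B, [], r.output)

/-- The transition function `δ` of `M(G)`: shift the dot over `X` and take the
closure.  The empty set plays the role of "undefined". -/
def next (g : ContextFreeGrammar.{uN} T) (s : LRState g) (X : Symbol T g.NT) : LRState g :=
  {d | Closure g {d' | ∃ A α β, (A, α, X :: β) ∈ s ∧ d' = (A, α ++ [X], β)} d}

/-- The start state `s₀` of `M(G)`: the closure of `{S' → · S}`. -/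
def start (g : ContextFreeGrammar.{uN} T) : LRState g :=
  {d | Closure g {(none, [], [Symbol.nonterminal g.initial])} d}

/-- The dotted rule `S' → S ·`. -/
def finalDR (g : ContextFreeGrammar.{uN} T) : DottedRule g :=
  (none, [Symbol.nonterminal g.initial], [])

/-- A state is final iff it contains `S' → S ·`. -/
def IsFinal (g : ContextFreeGrammar.{uN} T) (s : LRState g) : Prop := finalDR g ∈ s

/-- Iterated transition function, extended to strings of symbols. -/
def nextStar (g : ContextFreeGrammar.{uN} T) (s : LRState g)
    (α : List (Symbol T g.NT)) : LRState g :=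
  α.foldl (next g) s

/-- A stack of the shift-reduce recognizer: a sequence of (state, symbol) pairs. -/
abbrev Stack (g : ContextFreeGrammar.{uN} T) : Type _ :=
  List (LRState g × Symbol T g.NT)

/-- `Stacks g s σ` iff `σ = ⟨q₀,X₀⟩…⟨q_k,X_k⟩` with `q₀ = s₀`,
`q_i = δ(q_{i-1},X_{i-1})` and `s = δ(q_k,X_k)`; in addition `Stacks s₀`
contains the empty sequence. -/
inductive Stacks (g : ContextFreeGrammar.{uN} T) : LRState g → Stack g → Prop
  | nil : Stacks g (start g) []
  | snoc {q : LRState g} {σ : Stack g} {X : Symbol T g.NT} :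
      Stacks g q σ → next g q X ≠ ∅ → Stacks g (next g q X) (σ ++ [(q, X)])

/-- A configuration `⟨s, σ, w⟩` of the shift-reduce recognizer `R(G)`. -/
structure Cfg (g : ContextFreeGrammar.{uN} T) where
  state : LRState g
  stack : Stack g
  input : List T

/-- A shift move of `R(G)`. -/
inductive ShiftStep (g : ContextFreeGrammar.{uN} T) : Cfg g → Cfg g → Prop
  | shift {s : LRState g} {σ : Stack g} {x : T} {w : List T} :
      next g s (Symbol.terminal x) ≠ ∅ →
      ShiftStep g ⟨s, σ, x :: w⟩
        ⟨next g s (Symbol.terminal x), σ ++ [(s, Symbol.terminal x)], w⟩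

/-- A reduce move of `R(G)`. -/
inductive ReduceStep (g : ContextFreeGrammar.{uN} T) : Cfg g → Cfg g → Prop
  | empty {s : LRState g} {σ : Stack g} {w : List T} {A : g.NT} :
      (some A, ([] : List (Symbol T g.NT)), ([] : List (Symbol T g.NT))) ∈ s →
      next g s (Symbol.nonterminal A) ≠ ∅ →
      ReduceStep g ⟨s, σ, w⟩
        ⟨next g s (Symbol.nonterminal A), σ ++ [(s, Symbol.nonterminal A)], w⟩
  | pop {s : LRState g} {σ τ : Stack g} {w : List T} {A : g.NT}
      {s₁ : LRState g} {X₁ : Symbol T g.NT} :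
      (some A, ((s₁, X₁) :: τ).map Prod.snd, ([] : List (Symbol T g.NT))) ∈ s →
      next g s₁ (Symbol.nonterminal A) ≠ ∅ →
      ReduceStep g ⟨s, σ ++ (s₁, X₁) :: τ, w⟩
        ⟨next g s₁ (Symbol.nonterminal A), σ ++ [(s₁, Symbol.nonterminal A)], w⟩

/-- A move of the shift-reduce recognizer `R(G)`. -/
def Step (g : ContextFreeGrammar.{uN} T) (c c' : Cfg g) : Prop :=
  ShiftStep g c c' ∨ ReduceStep g c c'

/-- `R(G)` accepts `w`: some sequence of moves leads from the initial
configuration `⟨s₀, ε, w⟩` to a final configuration `⟨s, ⟨s₀,S⟩, ε⟩`, `s ∈ F`. -/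
def RAccepts (g : ContextFreeGrammar.{uN} T) (w : List T) : Prop :=
  ∃ s : LRState g, IsFinal g s ∧
    Relation.ReflTransGen (Step g) ⟨start g, [], w⟩
      ⟨s, [(start g, Symbol.nonterminal g.initial)], []⟩

/-- A stack congruence on `R(G)`: a family of equivalence relations on
`Stacks(s)`, compatible with pushing. -/
def IsStackCongruence (g : ContextFreeGrammar.{uN} T)
    (E : LRState g → Stack g → Stack g → Prop) : Prop :=
  (∀ s σ σ', E s σ σ' → Stacks g s σ ∧ Stacks g s σ') ∧
  (∀ s σ, Stacks g s σ → E s σ σ) ∧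
  (∀ s σ σ', E s σ σ' → E s σ' σ) ∧
  (∀ s σ₁ σ₂ σ₃, E s σ₁ σ₂ → E s σ₂ σ₃ → E s σ₁ σ₃) ∧
  (∀ s X σ σ', next g s X ≠ ∅ → E s σ σ' →
    E (next g s X) (σ ++ [(s, X)]) (σ' ++ [(s, X)]))

/-- A state of the unfolded recognizer `R_≡`: a state of `M(G)` together with
an equivalence class of stacks (represented as a set of stacks). -/
abbrev UState (g : ContextFreeGrammar.{uN} T) : Type _ := LRState g × Set (Stack g)

/-- Transition function `δ_≡` of the unfolded recognizer:
`δ_≡(⟨s,[σ]⟩, X) = ⟨δ(s,X), [σ⟨s,X⟩]⟩`. -/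
def uNext (g : ContextFreeGrammar.{uN} T) (E : LRState g → Stack g → Stack g → Prop)
    (p : UState g) (X : Symbol T g.NT) : UState g :=
  (next g p.1 X,
   {τ | Stacks g (next g p.1 X) τ ∧ ∃ σ ∈ p.2, E (next g p.1 X) τ (σ ++ [(p.1, X)])})

/-- Start state `⟨s₀, [ε]⟩` of the unfolded recognizer. -/
def uStart (g : ContextFreeGrammar.{uN} T)
    (E : LRState g → Stack g → Stack g → Prop) : UState g :=
  (start g, {τ | Stacks g (start g) τ ∧ E (start g) τ []})

/-- Genuine states of the unfolded recognizer: pairs `⟨s, [σ]_s⟩` with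
`σ ∈ Stacks(s)`. -/
def IsUState (g : ContextFreeGrammar.{uN} T)
    (E : LRState g → Stack g → Stack g → Prop) (p : UState g) : Prop :=
  ∃ σ, Stacks g p.1 σ ∧ p.2 = {τ | Stacks g p.1 τ ∧ E p.1 τ σ}

/-- Iterated `δ_≡`, extended to strings of symbols. -/
def uNextStar (g : ContextFreeGrammar.{uN} T)
    (E : LRState g → Stack g → Stack g → Prop)
    (p : UState g) (α : List (Symbol T g.NT)) : UState g :=
  α.foldl (uNext g E) p

/-- A configuration of the unfolded recognizer `R_≡`. -/
structure UCfg (g : ContextFreeGrammar.{uN} T) where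
  state : UState g
  stack : List (UState g × Symbol T g.NT)
  input : List T

/-- A shift move of the unfolded recognizer. -/
inductive UShiftStep (g : ContextFreeGrammar.{uN} T)
    (E : LRState g → Stack g → Stack g → Prop) : UCfg g → UCfg g → Prop
  | shift {p : UState g} {σ : List (UState g × Symbol T g.NT)} {x : T} {w : List T} :
      next g p.1 (Symbol.terminal x) ≠ ∅ →
      UShiftStep g E ⟨p, σ, x :: w⟩
        ⟨uNext g E p (Symbol.terminal x), σ ++ [(p, Symbol.terminal x)], w⟩

/-- A reduce move of the unfolded recognizer. -/
inductive UReduceStep (g : ContextFreeGrammar.{uN} T)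
    (E : LRState g → Stack g → Stack g → Prop) : UCfg g → UCfg g → Prop
  | empty {p : UState g} {σ : List (UState g × Symbol T g.NT)} {w : List T} {A : g.NT} :
      (some A, ([] : List (Symbol T g.NT)), ([] : List (Symbol T g.NT))) ∈ p.1 →
      next g p.1 (Symbol.nonterminal A) ≠ ∅ →
      UReduceStep g E ⟨p, σ, w⟩
        ⟨uNext g E p (Symbol.nonterminal A), σ ++ [(p, Symbol.nonterminal A)], w⟩
  | pop {p : UState g} {σ τ : List (UState g × Symbol T g.NT)} {w : List T} {A : g.NT}
      {p₁ : UState g} {X₁ : Symbol T g.NT} :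
      (some A, ((p₁, X₁) :: τ).map Prod.snd, ([] : List (Symbol T g.NT))) ∈ p.1 →
      next g p₁.1 (Symbol.nonterminal A) ≠ ∅ →
      UReduceStep g E ⟨p, σ ++ (p₁, X₁) :: τ, w⟩
        ⟨uNext g E p₁ (Symbol.nonterminal A), σ ++ [(p₁, Symbol.nonterminal A)], w⟩

/-- A move of the unfolded recognizer `R_≡`. -/
def UStep (g : ContextFreeGrammar.{uN} T)
    (E : LRState g → Stack g → Stack g → Prop) (c c' : UCfg g) : Prop :=
  UShiftStep g E c c' ∨ UReduceStep g E c c'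

/-- The unfolded recognizer `R_≡` accepts `w`. -/
def UAccepts (g : ContextFreeGrammar.{uN} T)
    (E : LRState g → Stack g → Stack g → Prop) (w : List T) : Prop :=
  ∃ p : UState g, IsFinal g p.1 ∧
    Relation.ReflTransGen (UStep g E) ⟨uStart g E, [], w⟩
      ⟨p, [(uStart g E, Symbol.nonterminal g.initial)], []⟩

/-- `Pop(p)`: the unfolded states reachable from `p` by a reduction. -/
def PopSet (g : ContextFreeGrammar.{uN} T)
    (E : LRState g → Stack g → Stack g → Prop) (p : UState g) : Set (UState g) :=
  {p' | ∃ (A : g.NT) (α : List (Symbol T g.NT)) (p'' : UState g),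
    IsUState g E p'' ∧
    (some A, α, ([] : List (Symbol T g.NT))) ∈ p.1 ∧
    (some A, ([] : List (Symbol T g.NT)), α) ∈ p''.1 ∧
    uNextStar g E p'' α = p ∧
    next g p''.1 (Symbol.nonterminal A) ≠ ∅ ∧
    uNext g E p'' (Symbol.nonterminal A) = p'}

/-- Paths in the flattening `F_≡` of the unfolded recognizer: terminal
transitions follow `δ_≡` and reductions become ε-transitions. -/
inductive FPath (g : ContextFreeGrammar.{uN} T)
    (E : LRState g → Stack g → Stack g → Prop) : UState g → List T → UState g → Prop
  | refl (p : UState g) : FPath g E p [] p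
  | shift {p : UState g} {x : T} {w : List T} {q : UState g} :
      next g p.1 (Symbol.terminal x) ≠ ∅ →
      FPath g E (uNext g E p (Symbol.terminal x)) w q → FPath g E p (x :: w) q
  | eps {p p' : UState g} {w : List T} {q : UState g} :
      p' ∈ PopSet g E p → FPath g E p' w q → FPath g E p w q

/-- The flattening `F_≡` accepts `w`. -/
def FAccepts (g : ContextFreeGrammar.{uN} T)
    (E : LRState g → Stack g → Stack g → Prop) (w : List T) : Prop :=
  ∃ q : UState g, IsFinal g q.1 ∧ FPath g E (uStart g E) w q

/-- A stack `⟨s₁,X₁⟩…⟨s_k,X_k⟩` is a loop if `δ(s_k,X_k) = s₁`. -/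
def IsLoop (g : ContextFreeGrammar.{uN} T) (τ : Stack g) : Prop :=
  ∃ p q : LRState g × Symbol T g.NT,
    τ.head? = some p ∧ τ.getLast? = some q ∧ next g q.1 q.2 = p.1

/-- A loop is minimal if no proper prefix of it is a loop. -/
def IsMinimalLoop (g : ContextFreeGrammar.{uN} T) (τ : Stack g) : Prop :=
  IsLoop g τ ∧ ∀ τ' : Stack g, τ' <+: τ → τ' ≠ τ → ¬ IsLoop g τ'

/-- A stack is collapsible if it contains a loop as a contiguous segment. -/
def Collapsible (g : ContextFreeGrammar.{uN} T) (σ : Stack g) : Prop :=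
  ∃ ρ τ υ : Stack g, σ = ρ ++ τ ++ υ ∧ IsLoop g τ

/-- `σ` immediately collapses to `σ'`: remove the earliest minimal loop. -/
def ImmediatelyCollapses (g : ContextFreeGrammar.{uN} T) (σ σ' : Stack g) : Prop :=
  ∃ ρ τ υ : Stack g, σ = ρ ++ τ ++ υ ∧ σ' = ρ ++ υ ∧ IsMinimalLoop g τ ∧
    ¬ ∃ ρ' τ' υ' : Stack g, σ = ρ' ++ τ' ++ υ' ∧ ρ' <+: ρ ∧ ρ' ≠ ρ ∧ IsLoop g τ'

/-- `σ` collapses to `σ'` by finitely many immediate collapses. -/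
def Collapses (g : ContextFreeGrammar.{uN} T) : Stack g → Stack g → Prop :=
  Relation.ReflTransGen (ImmediatelyCollapses g)

/-- Two stacks are collapsing-equivalent if they collapse to the same
uncollapsible stack. -/
def CollEquiv (g : ContextFreeGrammar.{uN} T) (σ σ' : Stack g) : Prop :=
  ∃ τ : Stack g, ¬ Collapsible g τ ∧ Collapses g σ τ ∧ Collapses g σ' τ

/-- The collapsing congruence: the restriction of collapsing equivalence to
the sets `Stacks(s)`. -/
def CollCong (g : ContextFreeGrammar.{uN} T) (s : LRState g) (σ σ' : Stack g) : Prop :=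
  Stacks g s σ ∧ Stacks g s σ' ∧ CollEquiv g σ σ'

/-- A CFG is left-linear if every rule has the form `A → Bβ` or `A → β`
with `β` a string of terminals. -/
def LeftLinear (g : ContextFreeGrammar.{uN} T) : Prop :=
  ∀ r ∈ g.rules, (∃ β : List T, r.output = β.map Symbol.terminal) ∨
    (∃ (B : g.NT) (β : List T), r.output = Symbol.nonterminal B :: β.map Symbol.terminal)

/-- A CFG is right-linear if every rule has the form `A → βB` or `A → β`
with `β` a string of terminals. -/
def RightLinear (g : ContextFreeGrammar.{uN} T) : Prop :=
  ∀ r ∈ g.rules, (∃ β : List T, r.output = β.map Symbol.terminal) ∨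
    (∃ (B : g.NT) (β : List T), r.output = β.map Symbol.terminal ++ [Symbol.nonterminal B])

/-- Reachable (genuine) states of `M(G)`. -/
def ReachableState (g : ContextFreeGrammar.{uN} T) (s : LRState g) : Prop :=
  s ≠ ∅ ∧ ∃ α : List (Symbol T g.NT), nextStar g (start g) α = s

end LRApprox

open LRApprox

/-!
For a right-linear grammar every derivation is a chain `S ⇒* u A ⇒ u β` of rules `A → β B`
closed by a rule `A → β` with `β` terminal (`ChainGenerates`). The LR(0) state reached on a
terminal word `u` contains only items `A → v · β` of rules whose left side is reached by a
chain ending in `u = u' v` (`ValidItem`).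

Soundness: a reduction of `F_≡` fires on a completed item `A → v ·`, so the input read so far is
chain-generated; since a nonterminal can only be the last symbol of a rule, the state after the
reduction consists of completed items, so no terminal can be read afterwards.

Completeness: read the word along a genuine stack, then undo the chain by one ε-move per rule.
These moves start from unfolded states reached along genuine stacks, which are genuine states of
`R_≡` because collapsing is a congruence: the uncollapsible stack a stack collapses to is its
chronological loop erasure (`eraseLoops`), which is computed one symbol at a time.
-/

namespace LRApprox

variable {T : Type*} {g : ContextFreeGrammar T}

lemma nextStar_append (s : LRState g) (γ δ : List (Symbol T g.NT)) :
    nextStar g s (γ ++ δ) = nextStar g (nextStar g s γ) δ :=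
  List.foldl_append

lemma nextStar_concat (s : LRState g) (γ : List (Symbol T g.NT)) (X : Symbol T g.NT) :
    nextStar g s (γ ++ [X]) = next g (nextStar g s γ) X :=
  List.foldl_concat _ _ _ _

lemma mem_next {s : LRState g} {A : Option g.NT} {α β : List (Symbol T g.NT)}
    {X : Symbol T g.NT} (h : (A, α, X :: β) ∈ s) : (A, α ++ [X], β) ∈ next g s X :=
  Closure.base ⟨A, α, β, h, rfl⟩

lemma mem_nextStar {s : LRState g} {A : Option g.NT} {α δ β : List (Symbol T g.NT)}
    (h : (A, α, δ ++ β) ∈ s) : (A, α ++ δ, β) ∈ nextStar g s δ := by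
  induction δ generalizing s α with
  | nil => simpa [nextStar] using h
  | cons X δ ih => simpa [nextStar] using ih (mem_next h)

lemma predict_mem_nextStar {γ : List (Symbol T g.NT)} {A : Option g.NT}
    {α β : List (Symbol T g.NT)} {B : g.NT} {r : ContextFreeRule T g.NT}
    (h : (A, α, Symbol.nonterminal B :: β) ∈ nextStar g (start g) γ) (hr : r ∈ g.rules)
    (hB : r.input = B) : (some B, [], r.output) ∈ nextStar g (start g) γ := by
  rcases List.eq_nil_or_concat' γ with rfl | ⟨γ, X, rfl⟩
  · exact Closure.step r h hr hB
  · rw [nextStar_concat] at h ⊢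
    exact Closure.step r h hr hB

lemma next_eq_empty {s : LRState g} {X : Symbol T g.NT}
    (h : ∀ A α β, (A, α, X :: β) ∉ s) : next g s X = ∅ := by
  refine Set.eq_empty_of_forall_notMem fun d hd => ?_
  induction hd with
  | base hd =>
    obtain ⟨A, α, β, hmem, -⟩ := hd
    exact h A α β hmem
  | step _ _ _ _ ih => exact ih

lemma nextStar_empty (γ : List (Symbol T g.NT)) : nextStar g ∅ γ = ∅ := by
  induction γ with
  | nil => rfl
  | cons X γ ih => rwa [nextStar, List.foldl_cons, next_eq_empty fun _ _ _ => Set.notMem_empty _]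

lemma Stacks.eq_nextStar {s : LRState g} {σ : Stack g} (h : Stacks g s σ) :
    s = nextStar g (start g) (σ.map Prod.snd) := by
  induction h with
  | nil => rfl
  | snoc _ _ ih => rw [List.map_append, List.map_singleton, nextStar_concat, ← ih]

lemma exists_stacks_of_nextStar_ne_empty {γ : List (Symbol T g.NT)}
    (h : nextStar g (start g) γ ≠ ∅) :
    ∃ σ, σ.map Prod.snd = γ ∧ Stacks g (nextStar g (start g) γ) σ := by
  induction γ using List.reverseRecOn with
  | nil => exact ⟨[], rfl, Stacks.nil⟩
  | append_singleton γ X ih =>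
    rw [nextStar_concat] at h ⊢
    have hγ : nextStar g (start g) γ ≠ ∅ := fun h0 => h (h0 ▸ nextStar_empty [X])
    obtain ⟨σ, hσ, hstk⟩ := ih hγ
    exact ⟨σ ++ [(nextStar g (start g) γ, X)], by simp [hσ], hstk.snoc h⟩

/-! ### Loop erasure -/

lemma IsLoop.ne_nil {τ : Stack g} (h : IsLoop g τ) : τ ≠ [] := by
  rintro rfl
  simp [IsLoop] at h

lemma isLoop_cons_append_singleton {c a : LRState g × Symbol T g.NT} {l : Stack g}
    (h : next g a.1 a.2 = c.1) : IsLoop g (c :: l ++ [a]) :=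
  ⟨c, a, rfl, List.getLast?_concat, h⟩

lemma isLoop_prefix_of_mem {c b : LRState g × Symbol T g.NT} {l : Stack g} (hb : b ∈ c :: l)
    (h : next g b.1 b.2 = c.1) : ∃ l', l' ++ [b] <+: c :: l ∧ IsLoop g (l' ++ [b]) := by
  obtain ⟨l₁, l₂, hl⟩ := List.append_of_mem hb
  refine ⟨l₁, ⟨l₂, by simp [hl]⟩, c, b, ?_, List.getLast?_concat, h⟩
  cases l₁ <;> simp_all

lemma Collapsible.append_right {σ : Stack g} (h : Collapsible g σ) (υ : Stack g) :
    Collapsible g (σ ++ υ) := by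
  obtain ⟨ρ, τ, υ', rfl, hτ⟩ := h
  exact ⟨ρ, τ, υ' ++ υ, by simp, hτ⟩

open Classical in
noncomputable def pushErase (π : Stack g) (a : LRState g × Symbol T g.NT) : Stack g :=
  (π ++ [a]).takeWhile fun c => c.1 ≠ next g a.1 a.2

noncomputable def eraseLoops (σ : Stack g) : Stack g := σ.foldl pushErase []

lemma eraseLoops_append (σ τ : Stack g) :
    eraseLoops (σ ++ τ) = τ.foldl pushErase (eraseLoops σ) :=
  List.foldl_append

lemma pushErase_append {ρ ξ : Stack g} {a : LRState g × Symbol T g.NT}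
    (h : ∀ c ∈ ρ, c.1 ≠ next g a.1 a.2) : pushErase (ρ ++ ξ) a = ρ ++ pushErase ξ a := by
  unfold pushErase
  rw [List.append_assoc, List.takeWhile_append_of_pos (by simpa using h)]

lemma foldl_pushErase_append {ρ τ ξ : Stack g}
    (h : ∀ a ∈ τ, ∀ c ∈ ρ, c.1 ≠ next g a.1 a.2) :
    τ.foldl pushErase (ρ ++ ξ) = ρ ++ τ.foldl pushErase ξ := by
  induction τ generalizing ξ with
  | nil => rfl
  | cons a τ ih =>
    simp only [List.foldl_cons]
    rw [pushErase_append (h a List.mem_cons_self),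
      ih fun b hb => h b (List.mem_cons_of_mem _ hb)]

lemma collapsible_of_mem {π : Stack g} {a c : LRState g × Symbol T g.NT} (hc : c ∈ π ++ [a])
    (h : c.1 = next g a.1 a.2) : Collapsible g (π ++ [a]) := by
  obtain ⟨l₁, l₂, hl⟩ := List.append_of_mem hc
  refine ⟨l₁, c :: l₂, [], by simp [hl], c, a, rfl, ?_, h.symm⟩
  have := congrArg List.getLast? hl
  rw [List.getLast?_concat, List.getLast?_append_of_ne_nil _ (List.cons_ne_nil _ _)] at this
  exact this.symm

lemma pushErase_of_not_collapsible {π : Stack g} {a : LRState g × Symbol T g.NT}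
    (h : ¬Collapsible g (π ++ [a])) : pushErase π a = π ++ [a] :=
  List.takeWhile_eq_self_iff.mpr fun _ hc => decide_eq_true fun hca => h (collapsible_of_mem hc hca)

lemma foldl_pushErase_of_not_collapsible {π σ : Stack g} (h : ¬Collapsible g (π ++ σ)) :
    σ.foldl pushErase π = π ++ σ := by
  induction σ generalizing π with
  | nil => simp
  | cons a σ ih =>
    have hπa : ¬Collapsible g (π ++ [a]) := fun hc => h (by simpa using hc.append_right σ)
    rw [List.foldl_cons, pushErase_of_not_collapsible hπa, ih (by simpa using h),
      List.append_assoc, List.singleton_append]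

lemma eraseLoops_of_not_collapsible {σ : Stack g} (h : ¬Collapsible g σ) : eraseLoops σ = σ :=
  foldl_pushErase_of_not_collapsible (π := []) h

lemma IsMinimalLoop.next_ne {c a : LRState g × Symbol T g.NT} {l : Stack g}
    (h : IsMinimalLoop g (c :: l ++ [a])) : ∀ b ∈ c :: l, next g b.1 b.2 ≠ c.1 := by
  intro b hb hbc
  obtain ⟨l', hpre, hloop⟩ := isLoop_prefix_of_mem hb hbc
  refine h.2 _ (hpre.trans ⟨[a], rfl⟩) (fun he => ?_) hloop
  have := congrArg List.length he
  have := hpre.length_le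
  simp_all

lemma eraseLoops_of_isMinimalLoop {τ : Stack g} (h : IsMinimalLoop g τ) : eraseLoops τ = [] := by
  obtain ⟨c, μ, rfl⟩ := List.exists_cons_of_ne_nil h.1.ne_nil
  rcases List.eq_nil_or_concat μ with rfl | ⟨l, a, rfl⟩
  · obtain ⟨p, q, hp, hq, hpq⟩ := h.1
    simp only [List.head?_cons, List.getLast?_singleton, Option.some.injEq] at hp hq
    subst hp hq
    simp [eraseLoops, pushErase, hpq]
  · rw [List.concat_eq_append, ← List.cons_append] at h ⊢
    have hne := h.next_ne
    have hca : next g a.1 a.2 = c.1 := by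
      obtain ⟨p, q, hp, hq, hpq⟩ := h.1
      rw [List.getLast?_concat, Option.some_inj] at hq
      rw [List.cons_append, List.head?_cons, Option.some_inj] at hp
      rwa [hp, hq]
    have hc : pushErase [] c = [c] :=
      List.takeWhile_eq_self_iff.mpr (by simpa using (hne c List.mem_cons_self).symm)
    have hcl : eraseLoops (c :: l) = c :: eraseLoops l :=
      (congrArg (l.foldl pushErase) hc).trans <|
        foldl_pushErase_append (ρ := [c]) (ξ := []) fun b hb c' hc' => by
          rw [List.mem_singleton] at hc'
          exact hc' ▸ (hne b (List.mem_cons_of_mem _ hb)).symm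
    rw [eraseLoops_append, hcl]
    simp [pushErase, hca]

lemma ImmediatelyCollapses.eraseLoops_eq {σ σ' : Stack g} (h : ImmediatelyCollapses g σ σ') :
    eraseLoops σ = eraseLoops σ' := by
  obtain ⟨ρ, τ, υ, rfl, rfl, hτ, hfirst⟩ := h
  have hearly : ∀ ρ₁ ρ₂ τ' υ', ρ = ρ₁ ++ ρ₂ → ρ₂ ≠ [] → ρ ++ τ ++ υ = ρ₁ ++ τ' ++ υ' →
      ¬IsLoop g τ' := fun ρ₁ ρ₂ τ' υ' hρ hρ₂ hσ hτ' =>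
    hfirst ⟨ρ₁, τ', υ', hσ, ⟨ρ₂, hρ.symm⟩, by simpa [hρ] using hρ₂, hτ'⟩
  have hρ : ¬Collapsible g ρ := by
    rintro ⟨ρ₁, τ', ρ₂, rfl, hτ'⟩
    exact hearly ρ₁ (τ' ++ ρ₂) τ' (ρ₂ ++ τ ++ υ) (by simp) (by simp [hτ'.ne_nil]) (by simp) hτ'
  have hρτ : ∀ a ∈ τ, ∀ c ∈ ρ, c.1 ≠ next g a.1 a.2 := by
    intro a ha c hc hca
    obtain ⟨ρ₁, ρ₂, rfl⟩ := List.append_of_mem hc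
    obtain ⟨τ₁, τ₂, rfl⟩ := List.append_of_mem ha
    exact hearly ρ₁ (c :: ρ₂) (c :: ρ₂ ++ τ₁ ++ [a]) (τ₂ ++ υ) rfl (List.cons_ne_nil _ _)
      (by simp) (isLoop_cons_append_singleton hca.symm)
  have hloop : τ.foldl pushErase ρ = ρ := by
    have := foldl_pushErase_append (ξ := []) hρτ
    rwa [List.append_nil, show τ.foldl pushErase [] = [] from eraseLoops_of_isMinimalLoop hτ,
      List.append_nil] at this
  rw [eraseLoops_append, eraseLoops_append, eraseLoops_append,
    eraseLoops_of_not_collapsible hρ, hloop]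

lemma Collapses.eraseLoops_eq {σ σ' : Stack g} (h : Collapses g σ σ') :
    eraseLoops σ = eraseLoops σ' := by
  induction h with
  | refl => rfl
  | tail _ hstep ih => exact ih.trans hstep.eraseLoops_eq

lemma exists_immediatelyCollapses {σ : Stack g} (h : Collapsible g σ) :
    ∃ σ', ImmediatelyCollapses g σ σ' ∧ σ'.length < σ.length := by
  classical
  have hstart : ∃ n m, IsLoop g ((σ.drop n).take m) := by
    obtain ⟨ρ, τ, υ, rfl, hτ⟩ := h
    exact ⟨ρ.length, τ.length, by simpa⟩
  set n := Nat.find hstart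
  have hend : ∃ m, IsLoop g ((σ.drop n).take m) := Nat.find_spec hstart
  set m := Nat.find hend
  have hτ : IsLoop g ((σ.drop n).take m) := Nat.find_spec hend
  refine ⟨σ.take n ++ (σ.drop n).drop m,
    ⟨σ.take n, (σ.drop n).take m, (σ.drop n).drop m, by simp, rfl, ⟨hτ, ?_⟩, ?_⟩, ?_⟩
  · intro τ' hpre hne hτ'
    obtain ⟨hpre, hlen⟩ := List.prefix_take_iff.mp hpre
    have hlt : τ'.length < m := by
      refine lt_of_le_of_ne hlen fun he => hne ?_
      rw [List.prefix_iff_eq_take.mp hpre, he]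
    exact Nat.find_min hend hlt (List.prefix_iff_eq_take.mp hpre ▸ hτ')
  · rintro ⟨ρ', τ', υ', hσ, hpre, hne, hτ'⟩
    obtain ⟨hpre, hlen⟩ := List.prefix_take_iff.mp hpre
    have hlt : ρ'.length < n := by
      refine lt_of_le_of_ne hlen fun he => hne ?_
      rw [List.prefix_iff_eq_take.mp hpre, he]
    refine Nat.find_min hstart hlt ⟨τ'.length, ?_⟩
    rwa [hσ, List.append_assoc, List.drop_left, List.take_left]
  · have := List.length_pos_iff.mpr hτ.ne_nil
    simp only [List.length_append, List.length_take, List.length_drop] at this ⊢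
    omega

lemma exists_collapses_not_collapsible (σ : Stack g) :
    ∃ τ, Collapses g σ τ ∧ ¬Collapsible g τ := by
  induction h : σ.length using Nat.strong_induction_on generalizing σ with
  | _ n ih =>
    by_cases hσ : Collapsible g σ
    · obtain ⟨σ', hstep, hlt⟩ := exists_immediatelyCollapses hσ
      obtain ⟨τ, hτ, hnf⟩ := ih _ (h ▸ hlt) σ' rfl
      exact ⟨τ, Relation.ReflTransGen.head hstep hτ, hnf⟩
    · exact ⟨σ, Relation.ReflTransGen.refl, hσ⟩

theorem collEquiv_iff_eraseLoops_eq {σ σ' : Stack g} :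
    CollEquiv g σ σ' ↔ eraseLoops σ = eraseLoops σ' := by
  constructor
  · rintro ⟨τ, -, hσ, hσ'⟩
    rw [hσ.eraseLoops_eq, hσ'.eraseLoops_eq]
  · intro he
    obtain ⟨τ, hτ, hnf⟩ := exists_collapses_not_collapsible σ
    obtain ⟨τ', hτ', hnf'⟩ := exists_collapses_not_collapsible σ'
    have : τ = τ' := by
      rw [← eraseLoops_of_not_collapsible hnf, ← eraseLoops_of_not_collapsible hnf',
        ← hτ.eraseLoops_eq, ← hτ'.eraseLoops_eq, he]
    exact ⟨τ, hnf, hτ, this ▸ hτ'⟩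

/-! ### The unfolded recognizer -/

lemma uNextStar_append (E : LRState g → Stack g → Stack g → Prop) (p : UState g)
    (γ δ : List (Symbol T g.NT)) :
    uNextStar g E p (γ ++ δ) = uNextStar g E (uNextStar g E p γ) δ :=
  List.foldl_append

lemma uNextStar_concat (E : LRState g → Stack g → Stack g → Prop) (p : UState g)
    (γ : List (Symbol T g.NT)) (X : Symbol T g.NT) :
    uNextStar g E p (γ ++ [X]) = uNext g E (uNextStar g E p γ) X :=
  List.foldl_concat _ _ _ _

lemma uNextStar_fst (E : LRState g → Stack g → Stack g → Prop) (p : UState g)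
    (γ : List (Symbol T g.NT)) : (uNextStar g E p γ).1 = nextStar g p.1 γ := by
  induction γ generalizing p with
  | nil => rfl
  | cons X γ ih => exact ih (uNext g E p X)

lemma collCong_iff {s : LRState g} {σ σ' : Stack g} :
    CollCong g s σ σ' ↔ Stacks g s σ ∧ Stacks g s σ' ∧ eraseLoops σ = eraseLoops σ' := by
  rw [CollCong, collEquiv_iff_eraseLoops_eq]

lemma uNextStar_uStart_of_stacks {s : LRState g} {σ : Stack g} (h : Stacks g s σ) :
    uNextStar g (CollCong g) (uStart g (CollCong g)) (σ.map Prod.snd)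
      = (s, {τ | Stacks g s τ ∧ CollCong g s τ σ}) := by
  induction h with
  | nil => rfl
  | @snoc q σ X hσ hne ih =>
    rw [List.map_append, List.map_singleton, uNextStar_concat, ih]
    refine Prod.ext rfl (Set.ext fun τ => ?_)
    simp only [uNext, Set.mem_ofPred_eq, collCong_iff, eraseLoops_append]
    constructor
    · rintro ⟨hτ, σ', ⟨-, -, -, he⟩, -, -, he'⟩
      exact ⟨hτ, hτ, hσ.snoc hne, by rw [he', he]⟩
    · rintro ⟨hτ, -, -, he⟩
      exact ⟨hτ, σ, ⟨hσ, hσ, hσ, rfl⟩, hτ, hσ.snoc hne, he⟩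

lemma isUState_uNextStar_uStart {γ : List (Symbol T g.NT)}
    (h : nextStar g (start g) γ ≠ ∅) :
    IsUState g (CollCong g) (uNextStar g (CollCong g) (uStart g (CollCong g)) γ) := by
  obtain ⟨σ, rfl, hσ⟩ := exists_stacks_of_nextStar_ne_empty h
  rw [uNextStar_uStart_of_stacks hσ]
  exact ⟨σ, hσ, rfl⟩

lemma FPath.trans {E : LRState g → Stack g → Stack g → Prop} {p q r : UState g}
    {v w : List T} (h : FPath g E p v q) (h' : FPath g E q w r) : FPath g E p (v ++ w) r := by
  induction h with
  | refl => exact h'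
  | shift hne _ ih => exact FPath.shift hne (ih h')
  | eps hpop _ ih => exact FPath.eps hpop (ih h')

lemma fPath_uNextStar (E : LRState g → Stack g → Stack g → Prop) {p : UState g} {w : List T}
    (h : nextStar g p.1 (w.map Symbol.terminal) ≠ ∅) :
    FPath g E p w (uNextStar g E p (w.map Symbol.terminal)) := by
  induction w generalizing p with
  | nil => exact FPath.refl p
  | cons x w ih =>
    have hx : next g p.1 (Symbol.terminal x) ≠ ∅ := fun h0 =>
      h (by rw [List.map_cons, nextStar, List.foldl_cons, h0]; exact nextStar_empty _)
    exact FPath.shift hx (ih h)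

lemma uNextStar_mem_popSet {γ α : List (Symbol T g.NT)} {A : g.NT}
    (hA : (some A, [], α) ∈ nextStar g (start g) γ)
    (hne : next g (nextStar g (start g) γ) (Symbol.nonterminal A) ≠ ∅) :
    uNextStar g (CollCong g) (uStart g (CollCong g)) (γ ++ [Symbol.nonterminal A]) ∈
      PopSet g (CollCong g) (uNextStar g (CollCong g) (uStart g (CollCong g)) (γ ++ α)) := by
  have hfst := uNextStar_fst (CollCong g) (uStart g (CollCong g)) γ
  refine ⟨A, α, _, isUState_uNextStar_uStart ((Set.nonempty_of_mem hA).ne_empty), ?_, hfst ▸ hA,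
    (uNextStar_append _ _ _ _).symm, hfst ▸ hne, (uNextStar_concat _ _ _ _).symm⟩
  rw [uNextStar_fst, uStart, nextStar_append]
  have := mem_nextStar (α := []) (δ := α) (β := []) (by rwa [List.append_nil])
  rwa [List.nil_append] at this

/-! ### Right-linear derivations -/

/-- `S ⇒* u A` by rules of the form `A → β B`. -/
inductive ChainDerives (g : ContextFreeGrammar T) : List T → g.NT → Prop
  | initial : ChainDerives g [] g.initial
  | step {u β : List T} {A B : g.NT} {r : ContextFreeRule T g.NT} :
      ChainDerives g u A → r ∈ g.rules → r.input = A →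
      r.output = β.map Symbol.terminal ++ [Symbol.nonterminal B] → ChainDerives g (u ++ β) B

def ChainGenerates (g : ContextFreeGrammar T) (w : List T) : Prop :=
  ∃ (u β : List T) (A : g.NT) (r : ContextFreeRule T g.NT), ChainDerives g u A ∧
    r ∈ g.rules ∧ r.input = A ∧ r.output = β.map Symbol.terminal ∧ w = u ++ β

lemma rewrites_map_terminal_append_singleton {N : Type*} {r : ContextFreeRule T N} {u : List T}
    {A : N} {y : List (Symbol T N)}
    (h : r.Rewrites (u.map Symbol.terminal ++ [Symbol.nonterminal A]) y) :
    r.input = A ∧ y = u.map Symbol.terminal ++ r.output := by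
  induction u generalizing y with
  | nil =>
    cases h with
    | head => exact ⟨rfl, List.append_nil _⟩
    | cons _ h => cases h
  | cons x u ih =>
    cases h with
    | cons _ h =>
      obtain ⟨hA, rfl⟩ := ih h
      exact ⟨hA, rfl⟩

lemma ChainDerives.derives {u : List T} {A : g.NT} (h : ChainDerives g u A) :
    g.Derives [Symbol.nonterminal g.initial] (u.map Symbol.terminal ++ [Symbol.nonterminal A]) := by
  induction h with
  | initial => exact Relation.ReflTransGen.refl
  | @step u β A B r _ hr hA hout ih =>
    refine ih.tail ⟨r, hr, ?_⟩
    have := ContextFreeRule.rewrites_of_exists_parts r (u.map Symbol.terminal) []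
    simpa [hA, hout] using this

lemma derives_initial_cases (hg : RightLinear g) {x : List (Symbol T g.NT)}
    (h : g.Derives [Symbol.nonterminal g.initial] x) :
    (∃ u A, ChainDerives g u A ∧ x = u.map Symbol.terminal ++ [Symbol.nonterminal A]) ∨
      ∃ w, ChainGenerates g w ∧ x = w.map Symbol.terminal := by
  induction h with
  | refl => exact Or.inl ⟨[], g.initial, ChainDerives.initial, rfl⟩
  | tail _ hstep ih =>
    obtain ⟨r, hr, hrw⟩ := hstep
    rcases ih with ⟨u, A, hchain, rfl⟩ | ⟨w, -, rfl⟩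
    · obtain ⟨hA, rfl⟩ := rewrites_map_terminal_append_singleton hrw
      rcases hg r hr with ⟨β, hβ⟩ | ⟨B, β, hβ⟩
      · exact Or.inr ⟨u ++ β, ⟨u, β, A, r, hchain, hr, hA, hβ, rfl⟩, by simp [hβ]⟩
      · exact Or.inl ⟨u ++ β, B, hchain.step hr hA hβ, by simp [hβ]⟩
    · simpa using hrw.nonterminal_input_mem

theorem mem_language_iff_chainGenerates (hg : RightLinear g) (w : List T) :
    w ∈ g.language ↔ ChainGenerates g w := by
  constructor
  · intro h
    rcases derives_initial_cases hg h with ⟨u, A, -, hw⟩ | ⟨w', hw', hw⟩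
    · have : Symbol.nonterminal A ∈ w.map (Symbol.terminal (N := g.NT)) := hw ▸ by simp
      simp at this
    · rwa [List.map_injective_iff.mpr (fun _ _ => Symbol.terminal.inj) hw]
  · rintro ⟨u, β, A, r, hchain, hr, hA, hout, rfl⟩
    refine hchain.derives.tail ⟨r, hr, ?_⟩
    have := ContextFreeRule.rewrites_of_exists_parts r (u.map Symbol.terminal) []
    simpa [hA, hout] using this

/-! ### Completeness -/

lemma ChainDerives.exists_mem_nextStar {u : List T} {A : g.NT} (h : ChainDerives g u A) :
    ∃ A' α, (A', α, [Symbol.nonterminal A]) ∈ nextStar g (start g) (u.map Symbol.terminal) := by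
  induction h with
  | initial => exact ⟨none, [], Closure.base rfl⟩
  | @step u β A B r _ hr hA hout ih =>
    obtain ⟨A', α, hmem⟩ := ih
    have hpred := predict_mem_nextStar hmem hr hA
    rw [hout] at hpred
    exact ⟨some A, _, by simpa [nextStar_append] using mem_nextStar hpred⟩

lemma ChainDerives.predict_mem_nextStar {u : List T} {A : g.NT} (h : ChainDerives g u A)
    {r : ContextFreeRule T g.NT} (hr : r ∈ g.rules) (hA : r.input = A) :
    (some A, [], r.output) ∈ nextStar g (start g) (u.map Symbol.terminal) := by
  obtain ⟨A', α, hmem⟩ := h.exists_mem_nextStar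
  exact LRApprox.predict_mem_nextStar hmem hr hA

lemma ChainDerives.next_ne_empty {u : List T} {A : g.NT} (h : ChainDerives g u A) :
    next g (nextStar g (start g) (u.map Symbol.terminal)) (Symbol.nonterminal A) ≠ ∅ := by
  obtain ⟨A', α, hmem⟩ := h.exists_mem_nextStar
  exact (Set.nonempty_of_mem (mem_next hmem)).ne_empty

/-- The ε-moves reduce `A → r.output` and then the rules of the chain `S ⇒* u A` in reverse
order. -/
lemma ChainDerives.exists_fPath_final {u : List T} {A : g.NT} (h : ChainDerives g u A)
    {r : ContextFreeRule T g.NT} (hr : r ∈ g.rules) (hA : r.input = A) :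
    ∃ q, IsFinal g q.1 ∧ FPath g (CollCong g)
      (uNextStar g (CollCong g) (uStart g (CollCong g)) (u.map Symbol.terminal ++ r.output))
      [] q := by
  induction h generalizing r with
  | initial =>
    refine ⟨_, ?_, FPath.eps (uNextStar_mem_popSet (γ := [])
      (ChainDerives.initial.predict_mem_nextStar hr hA) ChainDerives.initial.next_ne_empty)
      (FPath.refl _)⟩
    rw [IsFinal, uNextStar_fst]
    exact mem_next (s := start g) (Closure.base rfl)
  | @step u β A B r' hchain hr' hA' hout ih =>
    have hchain' := ChainDerives.step hchain hr' hA' hout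
    obtain ⟨q, hq, hpath⟩ := ih hr' hA'
    refine ⟨q, hq, FPath.eps ?_ hpath⟩
    have hpop := uNextStar_mem_popSet (hchain'.predict_mem_nextStar hr hA) hchain'.next_ne_empty
    rwa [hout, ← List.append_assoc, ← List.map_append]

theorem fAccepts_of_chainGenerates {w : List T} (h : ChainGenerates g w) :
    FAccepts g (CollCong g) w := by
  obtain ⟨u, β, A, r, hchain, hr, hA, hout, rfl⟩ := h
  have hpred := hchain.predict_mem_nextStar hr hA
  rw [hout, ← List.append_nil (β.map _)] at hpred
  have hread : nextStar g (uStart g (CollCong g)).1 ((u ++ β).map Symbol.terminal) ≠ ∅ := by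
    rw [List.map_append, nextStar_append]
    exact (Set.nonempty_of_mem (mem_nextStar hpred)).ne_empty
  obtain ⟨q, hq, hpath⟩ := hchain.exists_fPath_final hr hA
  rw [hout, ← List.map_append] at hpath
  exact ⟨q, hq, by simpa using (fPath_uNextStar _ hread).trans hpath⟩

/-! ### Soundness -/

lemma RightLinear.eq_nil_of_output_eq (hg : RightLinear g) {r : ContextFreeRule T g.NT}
    (hr : r ∈ g.rules) {α β : List (Symbol T g.NT)} {B : g.NT}
    (h : r.output = α ++ Symbol.nonterminal B :: β) : β = [] := by
  by_contra hβ
  have hmem : Symbol.nonterminal B ∈ r.output.dropLast := by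
    obtain ⟨b, β', rfl⟩ := List.exists_cons_of_ne_nil hβ
    rw [h, List.dropLast_append_of_ne_nil (List.cons_ne_nil _ _)]
    simp
  rcases hg r hr with ⟨δ, hδ⟩ | ⟨B', δ, hδ⟩
  · rw [hδ] at hmem
    simpa using List.mem_of_mem_dropLast hmem
  · rw [hδ, List.dropLast_concat] at hmem
    simp at hmem

/-- The items that can occur in the state reached on terminal input `u`. -/
inductive ValidItem (g : ContextFreeGrammar T) : List T → DottedRule g → Prop
  | initial : ValidItem g [] (none, [], [Symbol.nonterminal g.initial])
  | rule {u v : List T} {A : g.NT} {β : List (Symbol T g.NT)} {r : ContextFreeRule T g.NT} :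
      ChainDerives g u A → r ∈ g.rules → r.input = A → r.output = v.map Symbol.terminal ++ β →
      ValidItem g (u ++ v) (some A, v.map Symbol.terminal, β)

lemma ValidItem.eq_nil_of_nonterminal (hg : RightLinear g) {u : List T} {A : Option g.NT}
    {α β : List (Symbol T g.NT)} {B : g.NT}
    (h : ValidItem g u (A, α, Symbol.nonterminal B :: β)) : β = [] := by
  cases h with
  | initial => rfl
  | rule _ hr _ hout => exact hg.eq_nil_of_output_eq hr hout

lemma ValidItem.predict (hg : RightLinear g) {u : List T} {A : Option g.NT}
    {α β : List (Symbol T g.NT)} {B : g.NT} {r : ContextFreeRule T g.NT}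
    (h : ValidItem g u (A, α, Symbol.nonterminal B :: β)) (hr : r ∈ g.rules)
    (hB : r.input = B) : ValidItem g u (some B, [], r.output) := by
  have hβ := h.eq_nil_of_nonterminal hg
  subst hβ
  cases h with
  | initial => exact ValidItem.rule (u := []) (v := []) ChainDerives.initial hr hB rfl
  | rule hchain hr' hA hout =>
    simpa using ValidItem.rule (v := []) (hchain.step hr' hA hout) hr hB rfl

lemma ValidItem.shift {u : List T} {A : Option g.NT} {α β : List (Symbol T g.NT)} {x : T}
    (h : ValidItem g u (A, α, Symbol.terminal x :: β)) :
    ValidItem g (u ++ [x]) (A, α ++ [Symbol.terminal x], β) := by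
  cases h with
  | rule hchain hr hA hout =>
    have := ValidItem.rule (v := _ ++ [x]) hchain hr hA (by simpa using hout)
    rwa [List.map_append, List.map_singleton, ← List.append_assoc] at this

lemma ValidItem.of_mem (hg : RightLinear g) {u : List T} {d : DottedRule g}
    (hd : d ∈ nextStar g (start g) (u.map Symbol.terminal)) : ValidItem g u d := by
  induction u using List.reverseRecOn generalizing d with
  | nil =>
    induction hd with
    | base hd => exact hd ▸ ValidItem.initial
    | step r _ hr hB ih => exact ih.predict hg hr hB
  | append_singleton u x ih =>
    rw [List.map_append, List.map_singleton, nextStar_concat] at hd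
    induction hd with
    | base hd =>
      obtain ⟨A, α, β, hmem, rfl⟩ := hd
      exact (ih hmem).shift
    | step r _ hr hB ih' => exact ih'.predict hg hr hB

lemma finalDR_notMem (hg : RightLinear g) (u : List T) :
    finalDR g ∉ nextStar g (start g) (u.map Symbol.terminal) := fun h => by
  cases ValidItem.of_mem hg h

lemma chainGenerates_of_mem (hg : RightLinear g) {u : List T} {A : g.NT}
    {α : List (Symbol T g.NT)}
    (h : (some A, α, []) ∈ nextStar g (start g) (u.map Symbol.terminal)) : ChainGenerates g u := by
  cases ValidItem.of_mem hg h with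
  | rule hchain hr hA hout => exact ⟨_, _, A, _, hchain, hr, hA, by simpa using hout, rfl⟩

def IsComplete (s : LRState g) : Prop := ∀ d ∈ s, d.2.2 = []

lemma IsComplete.next_eq_empty {s : LRState g} (h : IsComplete s) (X : Symbol T g.NT) :
    next g s X = ∅ :=
  LRApprox.next_eq_empty fun _ _ β hd => List.cons_ne_nil X β (h _ hd)

lemma isComplete_next_nonterminal_of_map_terminal (hg : RightLinear g) (u : List T)
    (B : g.NT) :
    IsComplete (next g (nextStar g (start g) (u.map Symbol.terminal)) (Symbol.nonterminal B)) := by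
  intro d hd
  induction hd with
  | base hd =>
    obtain ⟨A, α, β, hmem, rfl⟩ := hd
    exact (ValidItem.of_mem hg hmem).eq_nil_of_nonterminal hg
  | step _ _ _ _ ih => exact absurd ih (List.cons_ne_nil _ _)

lemma map_terminal_or_isComplete (hg : RightLinear g) (γ : List (Symbol T g.NT)) :
    (∃ u : List T, γ = u.map Symbol.terminal) ∨ IsComplete (nextStar g (start g) γ) := by
  induction γ using List.reverseRecOn with
  | nil => exact Or.inl ⟨[], rfl⟩
  | append_singleton γ X ih =>
    rw [nextStar_concat]
    rcases ih with ⟨u, rfl⟩ | h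
    · cases X with
      | terminal x => exact Or.inl ⟨u ++ [x], by simp⟩
      | nonterminal B => exact Or.inr (isComplete_next_nonterminal_of_map_terminal hg u B)
    · rw [h.next_eq_empty]
      exact Or.inr fun _ hd => absurd hd (Set.notMem_empty _)

lemma isComplete_next_nonterminal (hg : RightLinear g) (γ : List (Symbol T g.NT)) (B : g.NT) :
    IsComplete (next g (nextStar g (start g) γ) (Symbol.nonterminal B)) := by
  rcases map_terminal_or_isComplete hg (γ ++ [Symbol.nonterminal B]) with ⟨u, hu⟩ | h
  · have : Symbol.nonterminal B ∈ u.map Symbol.terminal := hu ▸ by simp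
    simp at this
  · rwa [nextStar_concat] at h

lemma isComplete_of_mem_popSet (hg : RightLinear g) {E : LRState g → Stack g → Stack g → Prop}
    {p p' : UState g} (h : p' ∈ PopSet g E p) : IsComplete p'.1 := by
  obtain ⟨A, α, p'', ⟨σ, hσ, -⟩, -, -, -, -, rfl⟩ := h
  show IsComplete (next g p''.1 (Symbol.nonterminal A))
  rw [hσ.eq_nextStar]
  exact isComplete_next_nonterminal hg _ A

lemma FPath.eq_nil_of_isComplete (hg : RightLinear g)
    {E : LRState g → Stack g → Stack g → Prop} {p q : UState g} {w : List T}
    (h : FPath g E p w q) (hp : IsComplete p.1) : w = [] := by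
  induction h with
  | refl => rfl
  | shift hne _ _ => exact absurd (hp.next_eq_empty _) hne
  | eps hpop _ ih => exact ih (isComplete_of_mem_popSet hg hpop)

lemma FPath.chainGenerates (hg : RightLinear g) {E : LRState g → Stack g → Stack g → Prop}
    {p q : UState g} {w : List T} (h : FPath g E p w q) (hq : IsFinal g q.1) {u : List T}
    (hp : p.1 = nextStar g (start g) (u.map Symbol.terminal)) : ChainGenerates g (u ++ w) := by
  induction h generalizing u with
  | refl => exact absurd (hp ▸ hq) (finalDR_notMem hg u)
  | @shift p x w q _ _ ih =>
    have := ih hq (u := u ++ [x]) (by simp [uNext, hp, nextStar_concat])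
    rwa [List.append_assoc, List.singleton_append] at this
  | eps hpop hpath _ =>
    rw [hpath.eq_nil_of_isComplete hg (isComplete_of_mem_popSet hg hpop), List.append_nil]
    obtain ⟨A, α, -, -, hA, -⟩ := hpop
    exact chainGenerates_of_mem hg (hp ▸ hA)

theorem chainGenerates_of_fAccepts (hg : RightLinear g)
    {E : LRState g → Stack g → Stack g → Prop} {w : List T} (h : FAccepts g E w) :
    ChainGenerates g w := by
  obtain ⟨q, hq, hpath⟩ := h
  exact hpath.chainGenerates hg hq (u := []) rfl

end LRApprox

/-- For a right-linear CFG `G`, the FSA `F` derived from `G`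
by the basic approximation algorithm (the flattening of the recognizer
unfolded by the collapsing stack congruence) satisfies `L(G) = L(F)`. -/
theorem right_linear_exact {T : Type*} (g : LRApprox.ContextFreeGrammar T)
    (hg : RightLinear g) :
    ∀ w : List T, w ∈ g.language ↔ FAccepts g (CollCong g) w := fun w =>
  (mem_language_iff_chainGenerates hg w).trans
    ⟨fAccepts_of_chainGenerates, chainGenerates_of_fAccepts hg⟩
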